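/- Let x ≥ 2 and ρ ≥ 2 be integers with x^(ρ-1) ≡ 1 (mod ρ), and let K be the (ρ-1)×(ρ-1) companion matrix with first row (x-1, x-1, ..., x-1, x), subdiagonal of 1's, and 0 elsewhere. If u^n denotes the column vector (J_n, J_{n-1}, ..., J_{n-ρ+2})ᵀ with J_k = ⌊x^(k+1)/ρ⌋ - ⌊x^k/ρ⌋, then K·u^n = u^{n+1} for all n ≥ ρ - 2. -/

import Mathlib

/-!
Since `ρ ⌊a / ρ⌋ = a - (a mod ρ)`, the carry `⌊x^(k+1)/ρ⌋ - x ⌊x^k/ρ⌋ = ⌊x (x^k mod ρ) / ρ⌋` depends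
only on `x^k mod ρ`, which is periodic of period `ρ - 1` because `x^(ρ-1) ≡ 1 (mod ρ)`.
Telescoping the first row of `K · uⁿ` reduces it to exactly this periodicity of the carry;
the other rows of `K` only shift `uⁿ` down.
-/

open Finset Matrix

theorem Nat.mul_div_eq_mul_div_add_mul_mod_div (x a ρ : ℕ) :
    x * a / ρ = x * (a / ρ) + x * (a % ρ) / ρ := by
  rcases Nat.eq_zero_or_pos ρ with rfl | hρ
  · simp
  conv_lhs => rw [← Nat.div_add_mod a ρ, mul_add, Nat.mul_left_comm]
  exact Nat.mul_add_div hρ _ _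

theorem Nat.pow_add_mod_eq_of_pow_modEq_one {x ρ p : ℕ} (h : x ^ p ≡ 1 [MOD ρ]) (k : ℕ) :
    x ^ (k + p) % ρ = x ^ k % ρ := by
  have := Nat.ModEq.mul_left (x ^ k) h
  rwa [mul_one, ← pow_add] at this

theorem pow_succ_div_sub_mul_pow_div_periodic {x ρ p : ℕ} (h : x ^ p ≡ 1 [MOD ρ]) (k : ℕ) :
    ((x ^ (k + p + 1) / ρ : ℕ) : ℤ) - x * (x ^ (k + p) / ρ : ℕ) =
      ((x ^ (k + 1) / ρ : ℕ) : ℤ) - x * (x ^ k / ρ : ℕ) := by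
  have hcarry : ∀ k, x ^ (k + 1) / ρ = x * (x ^ k / ρ) + x * (x ^ k % ρ) / ρ := fun k => by
    rw [pow_succ', Nat.mul_div_eq_mul_div_add_mul_mod_div]
  rw [hcarry, hcarry, Nat.pow_add_mod_eq_of_pow_modEq_one h]
  simp only [Nat.cast_add, Nat.cast_mul]
  ring

theorem increment_eq_of_periodic {J F : ℕ → ℤ} (hJ : ∀ k, J k = F (k + 1) - F k) (c : ℤ)
    {p n : ℕ} (hpn : p ≤ n + 1)
    (hper : F (n + 2) - c * F (n + 1) = F (n + 1 - p + 1) - c * F (n + 1 - p)) :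
    J (n + 1) = (c - 1) * ∑ j ∈ range p, J (n - j) + J (n + 1 - p) := by
  have htel : ∑ j ∈ range p, J (n - j) = F (n + 1) - F (n + 1 - p) := by
    have := Finset.sum_range_sub' (fun j => F (n + 1 - j)) p
    rw [Nat.sub_zero] at this
    rw [← this]
    refine Finset.sum_congr rfl fun j hj => ?_
    have := Finset.mem_range.mp hj
    rw [hJ, show n - j + 1 = n + 1 - j by omega, show n - j = n + 1 - (j + 1) by omega]
  rw [htel, hJ, hJ]
  linear_combination hper

theorem sum_range_ite_mul {R : Type*} [Ring R] (f : ℕ → R) (a b : R) {N k : ℕ} (hk : k < N) :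
    ∑ j ∈ range N, (if j = k then b else a) * f j = a * ∑ j ∈ range N, f j + (b - a) * f k := by
  have hsplit : ∀ j,
      (if j = k then b else a) * f j = a * f j + if j = k then (b - a) * f k else 0 := by
    intro j
    split_ifs with h
    · rw [h, sub_mul, add_sub_cancel]
    · rw [add_zero]
  simp only [hsplit, Finset.sum_add_distrib, ← Finset.mul_sum, Finset.sum_ite_eq',
    Finset.mem_range.mpr hk, if_true]

theorem floor_div_pow_increment_recurrence {x ρ : ℕ} (hρ : 2 ≤ ρ) (hferm : x ^ (ρ - 1) ≡ 1 [MOD ρ])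
    {J : ℕ → ℤ} (hJ : ∀ n, J n = (x ^ (n + 1) / ρ : ℕ) - (x ^ n / ρ : ℕ)) {n : ℕ} (hn : ρ - 2 ≤ n) :
    J (n + 1) = ∑ j ∈ range (ρ - 1), (if j = ρ - 2 then (x : ℤ) else (x : ℤ) - 1) * J (n - j) := by
  have hper := pow_succ_div_sub_mul_pow_div_periodic hferm (n + 1 - (ρ - 1))
  rw [show n + 1 - (ρ - 1) + (ρ - 1) = n + 1 by omega] at hper
  rw [increment_eq_of_periodic (F := fun k => ((x ^ k / ρ : ℕ) : ℤ)) hJ (x : ℤ) (by omega) hper,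
    sum_range_ite_mul _ _ _ (by omega), show n + 1 - (ρ - 1) = n - (ρ - 2) by omega]
  ring

section Companion

variable {R : Type*} [NonAssocSemiring R] {d : ℕ} {K : Matrix (Fin d) (Fin d) R} {c : ℕ → R}

theorem companion_mulVec_apply_of_val_eq_zero
    (hK : ∀ i j : Fin d, K i j =
      if (i : ℕ) = 0 then c j else if (i : ℕ) = (j : ℕ) + 1 then 1 else 0)
    (v : Fin d → R) {i : Fin d} (hi : (i : ℕ) = 0) : (K *ᵥ v) i = ∑ j : Fin d, c j * v j := by
  simp only [Matrix.mulVec, dotProduct, hK, hi, if_true]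

theorem companion_mulVec_apply_of_val_ne_zero
    (hK : ∀ i j : Fin d, K i j =
      if (i : ℕ) = 0 then c j else if (i : ℕ) = (j : ℕ) + 1 then 1 else 0)
    (v : Fin d → R) {i : Fin d} (hi : (i : ℕ) ≠ 0) : (K *ᵥ v) i = v ⟨i - 1, by omega⟩ := by
  have hrow : ∀ j : Fin d, K i j = if j = ⟨i - 1, by omega⟩ then 1 else 0 := by
    intro j
    simp only [hK, hi, if_false, Fin.ext_iff]
    congr 1
    exact propext (by omega)
  simp only [Matrix.mulVec, dotProduct, hrow, ite_mul, one_mul, zero_mul, Finset.sum_ite_eq',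
    Finset.mem_univ, if_true]

end Companion

theorem stmt_15_general (x ρ : ℕ) (hρ : 2 ≤ ρ)
    (hferm : x ^ (ρ - 1) ≡ 1 [MOD ρ])
    (J : ℕ → ℤ) (hJ : ∀ n, J n = (x ^ (n + 1) / ρ : ℕ) - (x ^ n / ρ : ℕ))
    (K : Matrix (Fin (ρ - 1)) (Fin (ρ - 1)) ℤ)
    (hK : ∀ i j : Fin (ρ - 1), K i j =
      if (i : ℕ) = 0 then (if (j : ℕ) = ρ - 2 then (x : ℤ) else (x : ℤ) - 1)
      else if (i : ℕ) = (j : ℕ) + 1 then 1 else 0)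
    (u : ℕ → Fin (ρ - 1) → ℤ) (hu : ∀ n i, u n i = J (n - (i : ℕ))) :
    ∀ n, ρ - 2 ≤ n → K.mulVec (u n) = u (n + 1) := by
  intro n hn
  set c : ℕ → ℤ := fun j => if j = ρ - 2 then (x : ℤ) else (x : ℤ) - 1
  funext i
  by_cases hi : (i : ℕ) = 0
  · rw [companion_mulVec_apply_of_val_eq_zero (c := c) hK _ hi, hu, hi, Nat.sub_zero,
      floor_div_pow_increment_recurrence hρ hferm hJ hn]
    simp only [hu]
    exact Fin.sum_univ_eq_sum_range (fun j => c j * J (n - j)) _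
  · rw [companion_mulVec_apply_of_val_ne_zero (c := c) hK _ hi, hu, hu]
    congr 1
    dsimp only
    omega

theorem stmt_15 (x ρ : ℕ) (hx : 2 ≤ x) (hρ : 2 ≤ ρ)
    (hferm : x ^ (ρ - 1) ≡ 1 [MOD ρ])
    (J : ℕ → ℤ) (hJ : ∀ n, J n = (x ^ (n + 1) / ρ : ℕ) - (x ^ n / ρ : ℕ))
    (K : Matrix (Fin (ρ - 1)) (Fin (ρ - 1)) ℤ)
    (hK : ∀ i j : Fin (ρ - 1), K i j =
      if (i : ℕ) = 0 then (if (j : ℕ) = ρ - 2 then (x : ℤ) else (x : ℤ) - 1)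
      else if (i : ℕ) = (j : ℕ) + 1 then 1 else 0)
    (u : ℕ → Fin (ρ - 1) → ℤ) (hu : ∀ n i, u n i = J (n - (i : ℕ))) :
    ∀ n, ρ - 2 ≤ n → K.mulVec (u n) = u (n + 1) :=
  stmt_15_general x ρ hρ hferm J hJ K hK u hu
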